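/- arXiv:2304.00859 — 3 statements merged into one kernel-verified Lean document; each statement's English description precedes it below -/
import Mathlib

section
/- For every finite simple graph G of order n with minimum degree δ(G) ≥ 1 (in particular G has at least one edge), the strength of G satisfies str(G) ≥ n + δ(G). -/
open SimpleGraph

/-- The strength of a numbering `f` of a graph `G` on `Fin n`: the maximum value of
`(f u + 1) + (f v + 1)` over edges `uv` of `G` (labels are the 1-based values `f · + 1`). -/
noncomputable def strOf {n : ℕ} (G : SimpleGraph (Fin n)) (f : Fin n ≃ Fin n) : ℕ :=
  sSup {s | ∃ u v, G.Adj u v ∧ s = ((f u : ℕ) + 1) + ((f v : ℕ) + 1)}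

/-- The strength of a graph `G` on `Fin n`: the minimum over all numberings
(bijections `Fin n ≃ Fin n`) of the maximum edge label. -/
noncomputable def str {n : ℕ} (G : SimpleGraph (Fin n)) : ℕ :=
  sInf {s | ∃ f : Fin n ≃ Fin n, s = strOf G f}

/-- The domination number: minimum size of a set `S` such that every vertex not
in `S` is adjacent to some vertex of `S`. -/
noncomputable def dominationNumber {n : ℕ} (G : SimpleGraph (Fin n)) : ℕ :=
  sInf {k | ∃ S : Finset (Fin n), (∀ v ∉ S, ∃ u ∈ S, G.Adj u v) ∧ S.card = k}

/-- The independence number: maximum size of a set of pairwise non-adjacent vertices. -/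
noncomputable def indepNumber {n : ℕ} (G : SimpleGraph (Fin n)) : ℕ :=
  sSup {k | ∃ S : Finset (Fin n), (∀ u ∈ S, ∀ v ∈ S, u ≠ v → ¬ G.Adj u v) ∧ S.card = k}

/-- The vertex covering number: minimum size of a set of vertices meeting every edge. -/
noncomputable def vertexCoverNumber {n : ℕ} (G : SimpleGraph (Fin n)) : ℕ :=
  sInf {k | ∃ S : Finset (Fin n), (∀ u v, G.Adj u v → u ∈ S ∨ v ∈ S) ∧ S.card = k}

/-- The edge covering number: minimum size of a set of edges covering every vertex. -/
noncomputable def edgeCoverNumber {n : ℕ} (G : SimpleGraph (Fin n)) : ℕ :=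
  sInf {k | ∃ E : Finset (Sym2 (Fin n)),
    (∀ e ∈ E, e ∈ G.edgeSet) ∧ (∀ v : Fin n, ∃ e ∈ E, v ∈ e) ∧ E.card = k}

/-- The matching (edge independence) number: maximum size of a set of pairwise
non-incident edges. -/
noncomputable def matchingNumber {n : ℕ} (G : SimpleGraph (Fin n)) : ℕ :=
  sSup {k | ∃ M : Finset (Sym2 (Fin n)),
    (∀ e ∈ M, e ∈ G.edgeSet) ∧
    (∀ e ∈ M, ∀ e' ∈ M, e ≠ e' → ∀ v : Fin n, v ∈ e → v ∉ e') ∧ M.card = k}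

/-- The graph `F_k` on vertices `v_1, …, v_k` (here `v_i` is `⟨i-1, _⟩ : Fin k`), with
`v_i` adjacent to `v_j` iff `1 ≤ i ≤ ⌊k/2⌋` and `i + 1 ≤ j ≤ k + 1 - i`. -/
noncomputable def Fgraph (k : ℕ) : SimpleGraph (Fin k) :=
  SimpleGraph.fromRel (fun a b =>
    (a : ℕ) + 1 ≤ k / 2 ∧ (a : ℕ) + 2 ≤ (b : ℕ) + 1 ∧ (b : ℕ) + 1 ≤ k + 1 - ((a : ℕ) + 1))

/-- `G` contains `F_k` as a subgraph: there is an injective graph homomorphism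
from `F_k` into `G`. -/
noncomputable def ContainsF {n : ℕ} (G : SimpleGraph (Fin n)) (k : ℕ) : Prop :=
  ∃ φ : Fgraph k →g G, Function.Injective φ

/-!
Label the vertex `u` carrying the largest label `n`. Its at least `δ(G)` neighbours carry
distinct labels, so one of them carries a label `≥ δ(G)`, and that edge already has label sum
`≥ n + δ(G)`.
-/

theorem Finset.exists_mem_card_le_succ (s : Finset ℕ) (hs : s.Nonempty) :
    ∃ m ∈ s, s.card ≤ m + 1 := by
  obtain ⟨m, hm, hsup⟩ := s.exists_mem_eq_sup hs id
  refine ⟨m, hm, ?_⟩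
  simpa [hsup] using Finset.card_le_card (Finset.subset_range_sup_succ s)

theorem SimpleGraph.exists_adj_degree_le_succ {V : Type*} [Fintype V] (G : SimpleGraph V)
    [DecidableRel G.Adj] {f : V → ℕ} (hf : Function.Injective f) {u : V}
    (hu : 0 < G.degree u) : ∃ w, G.Adj u w ∧ G.degree u ≤ f w + 1 := by
  have hcard : ((G.neighborFinset u).image f).card = G.degree u := by
    rw [Finset.card_image_of_injective _ hf, card_neighborFinset_eq_degree]
  have hne : ((G.neighborFinset u).image f).Nonempty := by
    rw [← Finset.card_pos, hcard]; exact hu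
  obtain ⟨m, hm, hle⟩ := Finset.exists_mem_card_le_succ _ hne
  obtain ⟨w, hw, rfl⟩ := Finset.mem_image.mp hm
  exact ⟨w, (G.mem_neighborFinset u w).mp hw, hcard ▸ hle⟩

theorem le_strOf {n : ℕ} (G : SimpleGraph (Fin n)) (f : Fin n ≃ Fin n) {u v : Fin n}
    (huv : G.Adj u v) : ((f u : ℕ) + 1) + ((f v : ℕ) + 1) ≤ strOf G f := by
  refine le_csSup ⟨2 * n, ?_⟩ ⟨u, v, huv, rfl⟩
  rintro s ⟨a, b, -, rfl⟩
  have := (f a).isLt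
  have := (f b).isLt
  omega

theorem add_minDegree_le_strOf {n : ℕ} (G : SimpleGraph (Fin n)) [DecidableRel G.Adj]
    (hδ : 1 ≤ G.minDegree) (f : Fin n ≃ Fin n) : n + G.minDegree ≤ strOf G f := by
  have hn : 0 < n := Nat.pos_of_ne_zero <| by
    rintro rfl
    simp [minDegree_of_subsingleton] at hδ
  obtain ⟨u, hfu⟩ : ∃ u, (f u : ℕ) = n - 1 := ⟨f.symm ⟨n - 1, by omega⟩, by simp⟩
  have hδu : G.minDegree ≤ G.degree u := G.minDegree_le_degree u
  obtain ⟨w, huw, hw⟩ := G.exists_adj_degree_le_succ (f := fun v ↦ (f v : ℕ))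
    (Fin.val_injective.comp f.injective) (u := u) (by omega)
  have := le_strOf G f huw
  omega

/-- For every graph `G` of order `n` with minimum degree `δ(G) ≥ 1`,
`str(G) ≥ n + δ(G)`. -/
theorem strength_ge_order_add_minDegree (n : ℕ) (G : SimpleGraph (Fin n))
    [DecidableRel G.Adj] (hδ : 1 ≤ G.minDegree) :
    n + G.minDegree ≤ str G :=
  le_csInf ⟨_, Equiv.refl _, rfl⟩ fun _ ⟨f, hf⟩ ↦ hf ▸ add_minDegree_le_strOf G hδ f
end

section
/- Let G be a finite simple graph of order n with at least one edge, and let k be an integer with 2 ≤ k ≤ n−1. Then str(G) ≤ 2n − k if and only if the complement of G contains F_k as a subgraph (equivalently, there is an injective graph homomorphism from F_k into the complement of G). -/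
/-!
A numbering has strength at most `2n - k` exactly when no edge of `G` joins the vertices labelled
`n - a` and `n - b` with `a + b < k`, i.e. when the vertices carrying the `k` largest labels,
taken in decreasing order of labels, span a copy of `F_k` in the complement: any other edge has
an endpoint labelled at most `n - k`, so its label sum is at most `2n - k` anyway. Conversely a
copy of `F_k` in the complement yields such a numbering by giving its `i`-th vertex the label
`n + 1 - i` and numbering the remaining vertices arbitrarily.
-/

open SimpleGraph

lemma fgraph_adj_iff {k : ℕ} {a b : Fin k} :
    (Fgraph k).Adj a b ↔ a ≠ b ∧ (a : ℕ) + b < k := by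
  rw [Fgraph, fromRel_adj, ← Fin.val_ne_iff]
  omega

section TopLabel

variable {n k : ℕ} (h : k ≤ n)

def topLabel (a : Fin k) : Fin n := (Fin.castLE h a).rev

lemma val_topLabel (a : Fin k) : (topLabel h a : ℕ) = n - 1 - a := by
  rw [topLabel, Fin.val_rev, Fin.val_castLE]
  omega

lemma topLabel_injective : Function.Injective (topLabel h) :=
  Fin.rev_injective.comp (Fin.castLE_injective h)

lemma exists_topLabel_eq {i : Fin n} (hi : n - k ≤ i) : ∃ a, topLabel h a = i :=
  ⟨⟨n - 1 - i, by omega⟩, Fin.ext (by rw [val_topLabel]; dsimp only; omega)⟩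

end TopLabel

section Strength

variable {n : ℕ} (G : SimpleGraph (Fin n))

lemma strOf_le_iff (f : Fin n ≃ Fin n) (m : ℕ) :
    strOf G f ≤ m ↔ ∀ u v, G.Adj u v → (f u : ℕ) + f v + 2 ≤ m := by
  have hbdd : BddAbove {s | ∃ u v, G.Adj u v ∧ s = ((f u : ℕ) + 1) + ((f v : ℕ) + 1)} := by
    refine ⟨2 * n, ?_⟩
    rintro s ⟨u, v, -, rfl⟩
    omega
  rw [strOf, csSup_le_iff' hbdd]
  constructor
  · intro hle u v huv
    exact (hle _ ⟨u, v, huv, rfl⟩).trans' (by omega)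
  · rintro hle s ⟨u, v, huv, rfl⟩
    exact (hle u v huv).trans' (by omega)

lemma str_le_iff (m : ℕ) : str G ≤ m ↔ ∃ f, strOf G f ≤ m := by
  constructor
  · intro hle
    have hne : {s | ∃ f : Fin n ≃ Fin n, s = strOf G f}.Nonempty := ⟨_, Equiv.refl _, rfl⟩
    obtain ⟨f, hf⟩ := Nat.sInf_mem hne
    exact ⟨f, hf ▸ hle⟩
  · rintro ⟨f, hf⟩
    exact (show str G ≤ strOf G f from Nat.sInf_le ⟨f, rfl⟩).trans hf

lemma strOf_le_two_mul_sub_iff {k : ℕ} (h : k ≤ n) (f : Fin n ≃ Fin n) :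
    strOf G f ≤ 2 * n - k ↔ ∃ φ : Fgraph k →g Gᶜ, ∀ a, f (φ a) = topLabel h a := by
  rw [strOf_le_iff]
  constructor
  · intro hle
    refine ⟨⟨fun a => f.symm (topLabel h a), fun {a b} hab => ?_⟩, fun a => f.apply_symm_apply _⟩
    obtain ⟨hne, hsum⟩ := fgraph_adj_iff.1 hab
    refine (compl_adj G _ _).2 ⟨fun heq => hne (topLabel_injective h (f.symm.injective heq)), ?_⟩
    intro hadj
    have := hle _ _ hadj
    simp only [Equiv.apply_symm_apply, val_topLabel] at this
    omega
  · rintro ⟨φ, hφ⟩ u v huv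
    by_contra hlt
    obtain ⟨a, ha⟩ := exists_topLabel_eq h (i := f u) (by omega)
    obtain ⟨b, hb⟩ := exists_topLabel_eq h (i := f v) (by omega)
    have hu : φ a = u := f.injective (by rw [hφ, ha])
    have hv : φ b = v := f.injective (by rw [hφ, hb])
    have hab : (Fgraph k).Adj a b := by
      refine fgraph_adj_iff.2 ⟨fun hab => huv.ne (by rw [← hu, ← hv, hab]), ?_⟩
      have hua : (f u : ℕ) = n - 1 - a := ha ▸ val_topLabel h a
      have hvb : (f v : ℕ) = n - 1 - b := hb ▸ val_topLabel h b
      omega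
    exact ((φ.map_adj hab).2 (by rwa [hu, hv])).elim

end Strength

lemma containsF_iff_exists_numbering {n k : ℕ} (G : SimpleGraph (Fin n)) (h : k ≤ n) :
    ContainsF G k ↔ ∃ (f : Fin n ≃ Fin n) (φ : Fgraph k →g G), ∀ a, f (φ a) = topLabel h a := by
  constructor
  · rintro ⟨φ, hφ⟩
    obtain ⟨f, hf⟩ := Equiv.Perm.exists_extending_pair φ (topLabel h) hφ (topLabel_injective h)
    exact ⟨f, φ, hf⟩
  · rintro ⟨f, φ, hφ⟩
    refine ⟨φ, fun a b hab => topLabel_injective h ?_⟩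
    rw [← hφ, ← hφ, hab]

theorem strength_le_iff_compl_containsF_general (n k : ℕ) (G : SimpleGraph (Fin n))
    (hk₂ : k ≤ n - 1) :
    str G ≤ 2 * n - k ↔ ContainsF Gᶜ k := by
  have h : k ≤ n := by omega
  simp only [str_le_iff, strOf_le_two_mul_sub_iff G h, containsF_iff_exists_numbering Gᶜ h]

/-- For a graph `G` of order `n` with at least one edge and `2 ≤ k ≤ n - 1`,
`str(G) ≤ 2n - k` iff the complement of `G` contains `F_k` as a subgraph. -/
theorem strength_le_iff_compl_containsF (n k : ℕ) (G : SimpleGraph (Fin n))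
    (hE : G.edgeSet.Nonempty) (hk₁ : 2 ≤ k) (hk₂ : k ≤ n - 1) :
    str G ≤ 2 * n - k ↔ ContainsF Gᶜ k :=
  strength_le_iff_compl_containsF_general n k G hk₂
end

section
/- For every integer n ≥ 1, the strength of the odd cycle C_{2n+1} satisfies str(C_{2n+1}) = 2n + 3. -/
open SimpleGraph

/-!
Lower bound: if some numbering `f` of `C_{2n+1}` had strength at most `2n + 2`, then no two of
the `n + 1` vertices with labels `n + 1, …, 2n + 1` could be adjacent, since any two distinct such
labels sum to at least `2n + 3`. But an independent set `S` of a cycle is disjoint from its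
rotation `S + 1`, so `2 |S| ≤ 2n + 1`.

Upper bound: number the vertices `0, 1, 2, 3, …, 2n` of the cycle by `1, 2n + 1, 2, 2n, …`,
alternating between small and large labels; every edge then has sum `2n + 2` or `2n + 3`,
except the closing edge, whose sum is `n + 2`.
-/

open Finset

namespace SimpleGraph

lemma cycleGraph_adj_iff_eq_add_one {m : ℕ} [NeZero m] (hm : 2 ≤ m) {u v : Fin m} :
    (cycleGraph m).Adj u v ↔ u = v + 1 ∨ v = u + 1 := by
  have hone : ((1 : Fin m) : ℕ) = 1 := by rw [Fin.val_one', Nat.mod_eq_of_lt hm]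
  rw [cycleGraph_adj', ← hone, Fin.val_inj, Fin.val_inj, sub_eq_iff_eq_add', sub_eq_iff_eq_add']

lemma cycleGraph_adj_add_one {m : ℕ} [NeZero m] (hm : 2 ≤ m) (v : Fin m) :
    (cycleGraph m).Adj v (v + 1) :=
  (cycleGraph_adj_iff_eq_add_one hm).2 (Or.inr rfl)

lemma IsIndepSet.two_mul_card_le_of_forall_adj {V : Type*} [Fintype V] {G : SimpleGraph V}
    (σ : V ↪ V) (hσ : ∀ v, G.Adj v (σ v)) {S : Finset V} (hS : G.IsIndepSet S) :
    2 * #S ≤ Fintype.card V := by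
  classical
  have hdisj : Disjoint S (S.map σ) := by
    refine Finset.disjoint_left.2 fun v hv hv' => ?_
    obtain ⟨u, hu, rfl⟩ := mem_map.1 hv'
    exact hS hu hv (hσ u).ne (hσ u)
  calc 2 * #S = #(S ∪ S.map σ) := by rw [card_union_of_disjoint hdisj, card_map, two_mul]
    _ ≤ Fintype.card V := card_le_univ _

lemma IsIndepSet.two_mul_card_le_of_cycleGraph {m : ℕ} (hm : 2 ≤ m) {S : Finset (Fin m)}
    (hS : (cycleGraph m).IsIndepSet S) : 2 * #S ≤ m := by
  have : NeZero m := ⟨by omega⟩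
  simpa using hS.two_mul_card_le_of_forall_adj (addRightEmbedding 1) (cycleGraph_adj_add_one hm)

end SimpleGraph

lemma Fin.card_filter_sub_le_val {m k : ℕ} (hk : k ≤ m) : #{j : Fin m | m - k ≤ (j : ℕ)} = k := by
  have h := card_filter_add_card_filter_not (s := (univ : Finset (Fin m))) (fun j => (j : ℕ) < m - k)
  simp only [Fin.card_filter_val_lt, not_lt, card_univ, Fintype.card_fin] at h
  omega

section Strength

variable {m : ℕ} (G : SimpleGraph (Fin m)) (f : Fin m ≃ Fin m)

lemma add_le_strOf {u v : Fin m} (h : G.Adj u v) : (f u : ℕ) + 1 + ((f v : ℕ) + 1) ≤ strOf G f :=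
  le_csSup ⟨2 * m, by rintro _ ⟨u, v, -, rfl⟩; omega⟩ ⟨u, v, h, rfl⟩

lemma strOf_le {s : ℕ} (h : ∀ u v, G.Adj u v → (f u : ℕ) + 1 + ((f v : ℕ) + 1) ≤ s) :
    strOf G f ≤ s :=
  csSup_le' (by rintro _ ⟨u, v, huv, rfl⟩; exact h u v huv)

/-- If every `k`-set of vertices spans an edge, then the `k` largest labels already force an edge
sum of at least `(m - k + 1) + (m - k + 2)`. -/
lemma le_strOf_of_forall_card_not_isIndepSet {k : ℕ} (hk : k ≤ m)
    (h : ∀ S : Finset (Fin m), #S = k → ¬ G.IsIndepSet S) : 2 * m + 3 ≤ strOf G f + 2 * k := by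
  set S := ({j : Fin m | m - k ≤ (j : ℕ)} : Finset (Fin m)).map f.symm.toEmbedding
  have hmem : ∀ v, v ∈ S ↔ m - k ≤ (f v : ℕ) := by simp [S, mem_map_equiv]
  obtain ⟨u, hu, v, hv, huv, hadj⟩ : ∃ u ∈ S, ∃ v ∈ S, u ≠ v ∧ G.Adj u v := by
    simpa [IsIndepSet, Set.Pairwise] using h S (by rw [card_map, Fin.card_filter_sub_le_val hk])
  have hfuv : (f u : ℕ) ≠ f v := Fin.val_injective.ne (f.injective.ne huv)
  have := add_le_strOf G f hadj
  rw [hmem] at hu hv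
  omega

lemma str_eq_of_le_strOf {s : ℕ} (f₀ : Fin m ≃ Fin m) (hup : strOf G f₀ ≤ s)
    (hlow : ∀ f, s ≤ strOf G f) : str G = s := by
  have hmem : strOf G f₀ ∈ {t | ∃ f, t = strOf G f} := ⟨f₀, rfl⟩
  exact le_antisymm ((Nat.sInf_le hmem).trans hup)
    (le_csInf ⟨_, hmem⟩ (by rintro _ ⟨f, rfl⟩; exact hlow f))

end Strength

def oddCycleNumbering (n : ℕ) : Fin (2 * n + 1) ≃ Fin (2 * n + 1) where
  toFun i := ⟨if (i : ℕ) % 2 = 0 then i / 2 else 2 * n - i / 2, by split <;> omega⟩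
  invFun j := ⟨if (j : ℕ) ≤ n then 2 * j else 2 * (2 * n - j) + 1, by split <;> omega⟩
  left_inv i := by ext; simp only; split_ifs <;> omega
  right_inv j := by ext; simp only; split_ifs <;> omega

lemma oddCycleNumbering_add_le (n : ℕ) (u : Fin (2 * n + 1)) :
    (oddCycleNumbering n u : ℕ) + 1 + ((oddCycleNumbering n (u + 1) : ℕ) + 1) ≤ 2 * n + 3 := by
  simp only [oddCycleNumbering, Equiv.coe_fn_mk, Fin.val_add_one, Fin.ext_iff, Fin.val_last]
  have := u.isLt
  split_ifs <;> omega

lemma strOf_oddCycleNumbering_le {n : ℕ} (hn : 1 ≤ n) :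
    strOf (cycleGraph (2 * n + 1)) (oddCycleNumbering n) ≤ 2 * n + 3 := by
  refine strOf_le _ _ fun u v huv => ?_
  rcases (cycleGraph_adj_iff_eq_add_one (by omega)).1 huv with rfl | rfl
  · linarith [oddCycleNumbering_add_le n v]
  · exact oddCycleNumbering_add_le n u

/-- For every `n ≥ 1`, `str(C_{2n+1}) = 2n + 3`. -/
theorem strength_oddCycle (n : ℕ) (hn : 1 ≤ n) :
    str (SimpleGraph.cycleGraph (2 * n + 1)) = 2 * n + 3 := by
  refine str_eq_of_le_strOf _ (oddCycleNumbering n) (strOf_oddCycleNumbering_le hn) fun f => ?_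
  have hindep : ∀ S : Finset (Fin (2 * n + 1)), #S = n + 1 →
      ¬ (cycleGraph (2 * n + 1)).IsIndepSet S := fun S hS hSindep => by
    have := hSindep.two_mul_card_le_of_cycleGraph (by omega)
    omega
  have := le_strOf_of_forall_card_not_isIndepSet _ f (by omega) hindep
  omega
end
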